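/- (Lemma 4.4, case (ii).) Let {x^k} be a sequence generated by Algorithm 3.1 with data M > 0 and x⁰, let r > 0 be such that M is a Lipschitz constant of f on the closed ball B(x⁰, r), suppose the closed ball B(x⁰, r/2) contains a point of Q, and suppose the envelope f is strictly convex. Then {x^k} has at least one accumulation point, and every accumulation point x* of {x^k} satisfies f(x*) ≤ 0 (i.e., x* ∈ Q). -/

import Mathlib

open Filter Topology

noncomputable section

abbrev Euc (n : ℕ) := EuclideanSpace ℝ (Fin n)

/-- `ξ` is a subgradient of `g` at `x`. -/
def IsSubgradAt {n : ℕ} (g : Euc n → ℝ) (x ξ : Euc n) : Prop :=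
  ∀ y : Euc n, g x + (inner ℝ ξ (y - x) : ℝ) ≤ g y

/-- The envelope `f(x) = max_i f_i(x)` of finitely many functions. -/
def envl {n m : ℕ} [NeZero m] (f : Fin m → Euc n → ℝ) (x : Euc n) : ℝ :=
  Finset.univ.sup' Finset.univ_nonempty fun i => f i x

/-- The sequence `x` with relaxation parameters `lam` is generated by Algorithm 3.1
with data `M` for the family `f`. -/
def IsAlgSeq {n m : ℕ} [NeZero m] (f : Fin m → Euc n → ℝ) (M : ℝ)
    (x : ℕ → Euc n) (lam : ℕ → ℝ) : Prop :=
  ∀ k : ℕ, 0 ≤ lam k ∧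
    max 0 (envl f (x k)) ≤ lam k * M ^ 2 ∧
    lam k * M ^ 2 ≤ 2 * max 0 (envl f (x k)) ∧
    ∃ (w : Fin m → ℝ) (ξ : Fin m → Euc n),
      (∀ i, 0 ≤ w i) ∧ (∑ i, w i) = 1 ∧
      (∀ i, f i (x k) < envl f (x k) → w i = 0) ∧
      (∀ i, IsSubgradAt (f i) (x k) (ξ i)) ∧
      x (k + 1) = x k - lam k • ∑ i, w i • ξ i

/-! Fix a feasible point `z ∈ Q ∩ B(x⁰, r/2)`. The step `x^{k+1} = x^k - λ_k ν^k` uses a subgradient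
`ν^k` of the envelope, of norm at most `M` while `x^k` stays inside `B(x⁰, r)`; expanding the
square gives the Fejér inequality `‖x^{k+1} - z‖² ≤ ‖x^k - z‖² - 4 λ_k g(x^k)`, where
`g(p) = (f p + f z)/2 - f((p + z)/2)` is the midpoint gap of `f`, positive for `p ≠ z` by strict
convexity. Hence the iterates stay in `B(z, r/2) ⊆ B(x⁰, r)`, which gives accumulation points,
and `λ_k g(x^k) → 0`. Since `λ_k M² ≥ max(0, f(x^k))`, the continuous function
`max(0, f) · g` vanishes at every accumulation point `x*`, so `f(x*) ≤ 0` or `x* = z`. -/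

section Envelope

variable {n m : ℕ} [NeZero m]

theorem le_envl (f : Fin m → Euc n → ℝ) (i : Fin m) (y : Euc n) : f i y ≤ envl f y :=
  Finset.le_sup' (fun j => f j y) (Finset.mem_univ i)

theorem isSubgradAt_envl_sum {f : Fin m → Euc n → ℝ} {p : Euc n} {w : Fin m → ℝ}
    {ξ : Fin m → Euc n} (hw0 : ∀ i, 0 ≤ w i) (hw1 : ∑ i, w i = 1)
    (hactive : ∀ i, f i p < envl f p → w i = 0) (hξ : ∀ i, IsSubgradAt (f i) p (ξ i)) :
    IsSubgradAt (envl f) p (∑ i, w i • ξ i) := by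
  intro y
  have hweighted : ∑ i, w i * f i p = envl f p := by
    calc ∑ i, w i * f i p = ∑ i, w i * envl f p := by
          refine Finset.sum_congr rfl fun i _ => ?_
          rcases (le_envl f i p).lt_or_eq with h | h
          · simp [hactive i h]
          · rw [h]
      _ = envl f p := by rw [← Finset.sum_mul, hw1, one_mul]
  calc envl f p + inner ℝ (∑ i, w i • ξ i) (y - p)
      = ∑ i, w i * (f i p + inner ℝ (ξ i) (y - p)) := by
        simp only [sum_inner, real_inner_smul_left, mul_add, Finset.sum_add_distrib, hweighted]
    _ ≤ ∑ i, w i * envl f y :=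
        Finset.sum_le_sum fun i _ =>
          mul_le_mul_of_nonneg_left ((hξ i y).trans (le_envl f i y)) (hw0 i)
    _ = envl f y := by rw [← Finset.sum_mul, hw1, one_mul]

end Envelope

section Subgradient

variable {n : ℕ}

theorem IsSubgradAt.norm_le {F : Euc n → ℝ} {x0 p ν : Euc n} {r M : ℝ} (hM : 0 ≤ M)
    (hLip : ∀ y z : Euc n, y ∈ Metric.closedBall x0 r → z ∈ Metric.closedBall x0 r →
      |F y - F z| ≤ M * ‖y - z‖)
    (hp : p ∈ Metric.ball x0 r) (hsub : IsSubgradAt F p ν) : ‖ν‖ ≤ M := by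
  rcases eq_or_ne ν 0 with rfl | hν
  · simpa using hM
  have hνpos : 0 < ‖ν‖ := norm_pos_iff.mpr hν
  set t := r - dist p x0
  have ht : 0 < t := sub_pos.mpr hp
  set y := p + (t / ‖ν‖) • ν
  have hyp : y - p = (t / ‖ν‖) • ν := add_sub_cancel_left _ _
  have hnorm : ‖y - p‖ = t := by
    rw [hyp, norm_smul, Real.norm_of_nonneg (by positivity), div_mul_cancel₀ _ hνpos.ne']
  have hy : y ∈ Metric.closedBall x0 r := by
    rw [Metric.mem_closedBall]
    calc dist y x0 ≤ dist y p + dist p x0 := dist_triangle _ _ _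
      _ = r := by rw [dist_eq_norm, hnorm]; ring
  have key : t * ‖ν‖ ≤ M * t :=
    calc t * ‖ν‖ = inner ℝ ν (y - p) := by
          rw [hyp, real_inner_smul_right, real_inner_self_eq_norm_sq]; field_simp
      _ ≤ F y - F p := by linarith [hsub y]
      _ ≤ M * ‖y - p‖ := (le_abs_self _).trans (hLip y p hy (Metric.ball_subset_closedBall hp))
      _ = M * t := by rw [hnorm]
  nlinarith

def midpointGap (F : Euc n → ℝ) (z p : Euc n) : ℝ :=
  (F p + F z) / 2 - F ((1 / 2 : ℝ) • (p + z))

variable {F : Euc n → ℝ}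

theorem midpointGap_nonneg (hF : ConvexOn ℝ Set.univ F) (z p : Euc n) :
    0 ≤ midpointGap F z p := by
  have h := hF.2 (Set.mem_univ p) (Set.mem_univ z) (by norm_num : (0 : ℝ) ≤ 1 / 2)
    (by norm_num : (0 : ℝ) ≤ 1 / 2) (by norm_num)
  rw [← smul_add, smul_eq_mul, smul_eq_mul] at h
  unfold midpointGap
  linarith

theorem midpointGap_pos (hF : StrictConvexOn ℝ Set.univ F) {z p : Euc n} (hpz : p ≠ z) :
    0 < midpointGap F z p := by
  have h := hF.2 (Set.mem_univ p) (Set.mem_univ z) hpz (by norm_num : (0 : ℝ) < 1 / 2)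
    (by norm_num : (0 : ℝ) < 1 / 2) (by norm_num)
  rw [← smul_add, smul_eq_mul, smul_eq_mul] at h
  unfold midpointGap
  linarith

theorem continuous_midpointGap (hF : Continuous F) (z : Euc n) :
    Continuous (midpointGap F z) := by
  unfold midpointGap
  fun_prop

/-- The subgradient inequality at `p`, tested at the midpoint of `p` and `z`. -/
theorem IsSubgradAt.sub_add_two_midpointGap_le {z p ν : Euc n} (hsub : IsSubgradAt F p ν) :
    F p - F z + 2 * midpointGap F z p ≤ inner ℝ ν (p - z) := by
  have h := hsub ((1 / 2 : ℝ) • (p + z))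
  have hmid : (1 / 2 : ℝ) • (p + z) - p = (-(1 / 2) : ℝ) • (p - z) := by module
  rw [hmid, real_inner_smul_right] at h
  unfold midpointGap
  linarith

end Subgradient

theorem Antitone.tendsto_sub_succ {u : ℕ → ℝ} (hu : Antitone u) (hbdd : BddBelow (Set.range u)) :
    Tendsto (fun k => u k - u (k + 1)) atTop (𝓝 0) := by
  have hlim := tendsto_atTop_ciInf hu hbdd
  simpa using hlim.sub (hlim.comp (tendsto_add_atTop_nat 1))

namespace IsAlgSeq

variable {n m : ℕ} [NeZero m] {f : Fin m → Euc n → ℝ} {M : ℝ} {x : ℕ → Euc n} {lam : ℕ → ℝ}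

theorem exists_isSubgradAt (halg : IsAlgSeq f M x lam) (k : ℕ) :
    ∃ ν, IsSubgradAt (envl f) (x k) ν ∧ x (k + 1) = x k - lam k • ν := by
  obtain ⟨-, -, -, w, ξ, hw0, hw1, hactive, hξ, hstep⟩ := halg k
  exact ⟨_, isSubgradAt_envl_sum hw0 hw1 hactive hξ, hstep⟩

theorem lam_sq_mul_sq_le (halg : IsAlgSeq f M x lam) (hM : 0 < M) (k : ℕ) :
    lam k ^ 2 * M ^ 2 ≤ 2 * lam k * envl f (x k) := by
  obtain ⟨hlam, -, hupper, -⟩ := halg k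
  rcases le_total (envl f (x k)) 0 with hneg | hpos
  · rw [max_eq_left hneg] at hupper
    have : lam k = 0 :=
      le_antisymm (nonpos_of_mul_nonpos_left (by linarith) (pow_pos hM 2)) hlam
    simp [this]
  · rw [max_eq_right hpos] at hupper
    nlinarith

theorem envl_pos_of_lam_pos (halg : IsAlgSeq f M x lam) (hM : 0 < M) {k : ℕ}
    (hk : 0 < lam k) : 0 < envl f (x k) := by
  have := halg.lam_sq_mul_sq_le hM k
  nlinarith [mul_pos (mul_pos hk hk) (pow_pos hM 2)]

theorem envl_le_lam_mul_sq (halg : IsAlgSeq f M x lam) (k : ℕ) :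
    max 0 (envl f (x k)) ≤ lam k * M ^ 2 :=
  (halg k).2.1

variable {x0 z : Euc n} {r : ℝ}

theorem norm_sub_sq_succ_le (halg : IsAlgSeq f M x lam) (hM : 0 < M)
    (hLip : ∀ y z : Euc n, y ∈ Metric.closedBall x0 r → z ∈ Metric.closedBall x0 r →
      |envl f y - envl f z| ≤ M * ‖y - z‖)
    (hz : envl f z ≤ 0) {k : ℕ} (hk : x k ∈ Metric.ball x0 r) :
    ‖x (k + 1) - z‖ ^ 2 ≤ ‖x k - z‖ ^ 2 - 4 * lam k * midpointGap (envl f) z (x k) := by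
  obtain ⟨ν, hsub, hstep⟩ := halg.exists_isSubgradAt k
  have hlam : 0 ≤ lam k := (halg k).1
  have hinner := hsub.sub_add_two_midpointGap_le (z := z)
  have hν : lam k ^ 2 * ‖ν‖ ^ 2 ≤ lam k ^ 2 * M ^ 2 :=
    mul_le_mul_of_nonneg_left (pow_le_pow_left₀ (norm_nonneg _) (hsub.norm_le hM.le hLip hk) 2)
      (sq_nonneg _)
  have hexpand : ‖x (k + 1) - z‖ ^ 2
      = ‖x k - z‖ ^ 2 - 2 * lam k * inner ℝ ν (x k - z) + lam k ^ 2 * ‖ν‖ ^ 2 := by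
    rw [hstep, sub_right_comm, norm_sub_sq_real, real_inner_smul_right, real_inner_comm,
      norm_smul, mul_pow, Real.norm_eq_abs, sq_abs]
    ring
  nlinarith [halg.lam_sq_mul_sq_le hM k, mul_le_mul_of_nonneg_left hinner hlam]

theorem succ_eq_or_norm_lt (halg : IsAlgSeq f M x lam) (hM : 0 < M)
    (hLip : ∀ y z : Euc n, y ∈ Metric.closedBall x0 r → z ∈ Metric.closedBall x0 r →
      |envl f y - envl f z| ≤ M * ‖y - z‖)
    (hz : envl f z ≤ 0) (hstrict : StrictConvexOn ℝ Set.univ (envl f)) {k : ℕ}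
    (hk : x k ∈ Metric.ball x0 r) :
    x (k + 1) = x k ∨ ‖x (k + 1) - z‖ < ‖x k - z‖ := by
  rcases (halg k).1.eq_or_lt with hlam | hlam
  · left
    obtain ⟨ν, -, hstep⟩ := halg.exists_isSubgradAt k
    rw [hstep, ← hlam, zero_smul, sub_zero]
  · right
    have hxz : x k ≠ z := fun h => by
      linarith [halg.envl_pos_of_lam_pos hM hlam, h ▸ hz]
    have hgap := midpointGap_pos hstrict hxz
    have := halg.norm_sub_sq_succ_le hM hLip hz hk
    exact lt_of_pow_lt_pow_left₀ 2 (norm_nonneg _) (by nlinarith)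

theorem mem_ball_and_mem_closedBall (halg : IsAlgSeq f M x lam) (hM : 0 < M) (hx0 : x 0 = x0)
    (hr : 0 < r)
    (hLip : ∀ y z : Euc n, y ∈ Metric.closedBall x0 r → z ∈ Metric.closedBall x0 r →
      |envl f y - envl f z| ≤ M * ‖y - z‖)
    (hzball : z ∈ Metric.closedBall x0 (r / 2)) (hz : envl f z ≤ 0)
    (hstrict : StrictConvexOn ℝ Set.univ (envl f)) (k : ℕ) :
    x k ∈ Metric.ball x0 r ∧ x k ∈ Metric.closedBall z (r / 2) := by
  rw [Metric.mem_closedBall] at hzball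
  induction k with
  | zero => exact ⟨hx0 ▸ Metric.mem_ball_self hr, hx0 ▸ Metric.mem_closedBall'.mpr hzball⟩
  | succ k ih =>
    rcases halg.succ_eq_or_norm_lt hM hLip hz hstrict ih.1 with heq | hlt
    · rwa [heq]
    · rw [← dist_eq_norm, ← dist_eq_norm] at hlt
      have hclose : dist (x (k + 1)) z < r / 2 := hlt.trans_le (Metric.mem_closedBall.mp ih.2)
      refine ⟨?_, Metric.mem_closedBall.mpr hclose.le⟩
      rw [Metric.mem_ball]
      linarith [dist_triangle (x (k + 1)) z x0]

theorem tendsto_max_mul_midpointGap (halg : IsAlgSeq f M x lam) (hM : 0 < M)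
    (hLip : ∀ y z : Euc n, y ∈ Metric.closedBall x0 r → z ∈ Metric.closedBall x0 r →
      |envl f y - envl f z| ≤ M * ‖y - z‖)
    (hz : envl f z ≤ 0) (hconvex : ConvexOn ℝ Set.univ (envl f))
    (hball : ∀ k, x k ∈ Metric.ball x0 r) :
    Tendsto (fun k => max 0 (envl f (x k)) * midpointGap (envl f) z (x k)) atTop (𝓝 0) := by
  set d : ℕ → ℝ := fun k => ‖x k - z‖ ^ 2
  have hgap k : 0 ≤ midpointGap (envl f) z (x k) := midpointGap_nonneg hconvex z (x k)
  have hdecr k : 4 * lam k * midpointGap (envl f) z (x k) ≤ d k - d (k + 1) := by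
    linarith [halg.norm_sub_sq_succ_le hM hLip hz (hball k)]
  have hanti : Antitone d := antitone_nat_of_succ_le fun k => by
    nlinarith [hdecr k, (halg k).1, hgap k]
  have hdiff := hanti.tendsto_sub_succ ⟨0, by rintro _ ⟨k, rfl⟩; positivity⟩
  refine squeeze_zero (fun k => mul_nonneg (le_max_left _ _) (hgap k)) (fun k => ?_)
    (by simpa using hdiff.const_mul (M ^ 2 / 4))
  calc max 0 (envl f (x k)) * midpointGap (envl f) z (x k)
      ≤ lam k * M ^ 2 * midpointGap (envl f) z (x k) :=
        mul_le_mul_of_nonneg_right (halg.envl_le_lam_mul_sq k) (hgap k)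
    _ ≤ M ^ 2 / 4 * (d k - d (k + 1)) := by nlinarith [hdecr k]

end IsAlgSeq

theorem stmt6_general
    {n m : ℕ} [NeZero m] (f : Fin m → Euc n → ℝ)
    (M : ℝ) (hM : 0 < M) (x : ℕ → Euc n) (lam : ℕ → ℝ)
    (halg : IsAlgSeq f M x lam) (x0 : Euc n) (hx0 : x 0 = x0)
    (r : ℝ) (hr : 0 < r)
    (hLip : ∀ y z : Euc n, y ∈ Metric.closedBall x0 r → z ∈ Metric.closedBall x0 r →
      |envl f y - envl f z| ≤ M * ‖y - z‖)
    (hfeas : ∃ z : Euc n, z ∈ Metric.closedBall x0 (r / 2) ∧ envl f z ≤ 0)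
    (hstrict : StrictConvexOn ℝ Set.univ (envl f)) :
    (∃ (xs : Euc n) (φ : ℕ → ℕ), StrictMono φ ∧ Tendsto (x ∘ φ) atTop (𝓝 xs)) ∧
    (∀ xs : Euc n, (∃ φ : ℕ → ℕ, StrictMono φ ∧ Tendsto (x ∘ φ) atTop (𝓝 xs)) →
      envl f xs ≤ 0) := by
  obtain ⟨z, hzball, hz⟩ := hfeas
  have hbound := halg.mem_ball_and_mem_closedBall hM hx0 hr hLip hzball hz hstrict
  refine ⟨?_, ?_⟩
  · obtain ⟨xs, -, φ, hφ, hlim⟩ :=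
      tendsto_subseq_of_bounded Metric.isBounded_closedBall fun k => (hbound k).2
    exact ⟨xs, φ, hφ, hlim⟩
  · rintro xs ⟨φ, hφ, hlim⟩
    have hcont : Continuous (envl f) :=
      continuousOn_univ.mp (hstrict.convexOn.continuousOn isOpen_univ)
    have hzero : max 0 (envl f xs) * midpointGap (envl f) z xs = 0 :=
      tendsto_nhds_unique
        ((((continuous_const.max hcont).mul (continuous_midpointGap hcont z)).tendsto xs).comp hlim)
        ((halg.tendsto_max_mul_midpointGap hM hLip hz hstrict.convexOn
          fun k => (hbound k).1).comp hφ.tendsto_atTop)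
    rcases mul_eq_zero.mp hzero with hmax | hgap
    · exact max_eq_left_iff.mp hmax
    · by_contra hpos
      exact (midpointGap_pos hstrict fun h : xs = z => hpos (h ▸ hz)).ne' hgap

theorem stmt6
    {n m : ℕ} (hn : 0 < n) [NeZero m] (f : Fin m → Euc n → ℝ)
    (hconv : ∀ i, ConvexOn ℝ Set.univ (f i))
    (M : ℝ) (hM : 0 < M) (x : ℕ → Euc n) (lam : ℕ → ℝ)
    (halg : IsAlgSeq f M x lam) (x0 : Euc n) (hx0 : x 0 = x0)
    (r : ℝ) (hr : 0 < r)
    (hLip : ∀ y z : Euc n, y ∈ Metric.closedBall x0 r → z ∈ Metric.closedBall x0 r →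
      |envl f y - envl f z| ≤ M * ‖y - z‖)
    (hfeas : ∃ z : Euc n, z ∈ Metric.closedBall x0 (r / 2) ∧ envl f z ≤ 0)
    (hstrict : StrictConvexOn ℝ Set.univ (envl f)) :
    (∃ (xs : Euc n) (φ : ℕ → ℕ), StrictMono φ ∧ Tendsto (x ∘ φ) atTop (𝓝 xs)) ∧
    (∀ xs : Euc n, (∃ φ : ℕ → ℕ, StrictMono φ ∧ Tendsto (x ∘ φ) atTop (𝓝 xs)) →
      envl f xs ≤ 0) :=
  stmt6_general f M hM x lam halg x0 hx0 r hr hLip hfeas hstrict
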